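/- arXiv:2202.08797 — 5 statements merged into one kernel-verified Lean document; each statement's English description precedes it below -/
import Mathlib

section
/- Let α ∈ Φ₊ be simple in the sense that s_α permutes Φ₊ ∖ {α}, assume θα = −α and ⟨λ, α̌⟩ ∉ ℤ. For μ ∈ V and a function δ from the real roots to {±1}, set ℓ_H(μ, δ) = (1/2)·Σ_{β ∈ Φ₊ real, ⟨μ, β̌⟩ ∉ ℤ} (−1)^{⌊⟨μ+ρ_ℝ, β̌⟩⌋}·δ(β). Define ε'(β) = (−1)^{⟨α, β̌⟩}·ε(s_α β) for every real root β. Then ℓ_H(s_α λ, ε') = ℓ_H(λ, ε) + (−1)^{⌊⟨λ, α̌⟩⌋}·ε(α). -/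
/-!
Write `s` for the reflection in `α`. Since `s` permutes the positive roots other than `α` and
preserves realness, `⟨ρℝ, α̌⟩ = 1`, and `β ↦ s β` matches the terms of `ℓ_H(s λ, ε')` other than
`β = α` with those of `ℓ_H(λ, ε)`: the identities `⟨s λ, β̌⟩ = ⟨λ, (s β)̌⟩` and
`⟨ρℝ, β̌⟩ = ⟨ρℝ, (s β)̌⟩ + ⟨α, β̌⟩` show that the sign `(-1)^⟨α,β̌⟩` in `ε'` exactly absorbs the
shift of the floor. Only the `α`-terms differ: with `c = ⟨λ, α̌⟩ ∉ ℤ` they are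
`(-1)^⌊1 - c⌋ ε(α) = (-1)^⌊c⌋ ε(α)` and `(-1)^⌊c + 1⌋ ε(α) = -(-1)^⌊c⌋ ε(α)`.
-/

open Finset
open scoped Classical

/-- The Hodge shift `ℓ_H(μ, δ) = ½ Σ_{β ∈ Φ₊ real, ⟨μ,β̌⟩ ∉ ℤ} (-1)^⌊⟨μ+ρℝ,β̌⟩⌋ δ(β)`. -/
noncomputable def hodgeShift {V : Type*} [AddCommGroup V] [Module ℝ V]
    (Φpos : Finset V) (coroot : V → Module.Dual ℝ V) (θ : V →ₗ[ℝ] V) (ρℝ : V)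
    (μ : V) (δ : V → ℝ) : ℝ :=
  (1 / 2 : ℝ) * ∑ β ∈ Φpos.filter
      (fun β => θ β = -β ∧ ¬∃ n : ℤ, coroot β μ = (n : ℝ)),
    (-1 : ℝ) ^ ⌊coroot β (μ + ρℝ)⌋ * δ β

open Module

lemma neg_one_zpow_neg (n : ℤ) : (-1 : ℝ) ^ (-n) = (-1) ^ n := by
  rw [zpow_neg, ← inv_zpow, inv_neg_one]

lemma neg_one_zpow_floor_add_one (x : ℝ) : (-1 : ℝ) ^ ⌊x + 1⌋ = -(-1) ^ ⌊x⌋ := by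
  rw [Int.floor_add_one, zpow_add_one₀ (by norm_num), mul_neg_one]

lemma neg_one_zpow_floor_neg {x : ℝ} (hx : x ∉ Set.range Int.cast) :
    (-1 : ℝ) ^ ⌊-x⌋ = -(-1) ^ ⌊x⌋ := by
  rw [Int.floor_neg, (Int.ceil_eq_floor_add_one_iff_notMem x).mpr hx, neg_one_zpow_neg,
    zpow_add_one₀ (by norm_num), mul_neg_one]

lemma neg_one_zpow_floor_add_intCast_mul (x : ℝ) (n : ℤ) :
    (-1 : ℝ) ^ ⌊x + n⌋ * (-1) ^ n = (-1) ^ ⌊x⌋ := by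
  rw [Int.floor_add_intCast, zpow_add₀ (by norm_num), mul_assoc, ← mul_zpow]
  norm_num

section Reflection

variable {R V : Type*} [CommRing R] [AddCommGroup V] [Module R V]

lemma apply_reflection_eq_neg {x : V} {f : Dual R V} (h : f x = 2) (y : V) :
    f (reflection h y) = -f y := by
  rw [reflection_apply, map_sub, map_smul, h, smul_eq_mul]
  ring

variable {coroot : V → Dual R V} {α : V} (hαα : coroot α α = 2)

lemma coroot_apply_reflection {β : V}
    (hco : coroot (reflection hαα β) = coroot β - coroot β α • coroot α) (μ : V) :
    coroot β (reflection hαα μ) = coroot (reflection hαα β) μ := by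
  rw [hco, reflection_apply, map_sub, map_smul, LinearMap.sub_apply, LinearMap.smul_apply,
    smul_eq_mul, smul_eq_mul, mul_comm]

lemma coroot_apply_reflection_add {β ρ : V}
    (hco : coroot (reflection hαα β) = coroot β - coroot β α • coroot α)
    (hρα : coroot α ρ = 1) (μ : V) :
    coroot β (reflection hαα μ + ρ) = coroot (reflection hαα β) (μ + ρ) + coroot β α := by
  rw [map_add, coroot_apply_reflection hαα hco, map_add, hco]
  simp only [LinearMap.sub_apply, LinearMap.smul_apply, hρα, smul_eq_mul, mul_one]
  ring

lemma apply_reflection_eq_neg_of_apply_eq_neg {θ : V →ₗ[R] V} (hθα : θ α = -α) {β : V}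
    (hθβ : θ β = -β) : θ (reflection hαα β) = -reflection hαα β := by
  rw [reflection_apply, map_sub, map_smul, hθβ, hθα, smul_neg]
  abel

variable {Φpos : Finset V}

lemma reflection_mem_erase_filter
    (hsimple : ∀ β ∈ Φpos, β ≠ α → reflection hαα β ∈ Φpos ∧ reflection hαα β ≠ α)
    {p q : V → Prop} [DecidablePred p] [DecidablePred q]
    (hpq : ∀ β ∈ Φpos, p β → q (reflection hαα β)) {β : V}
    (hβ : β ∈ (Φpos.filter p).erase α) : reflection hαα β ∈ (Φpos.filter q).erase α := by
  obtain ⟨hβα, hβ⟩ := mem_erase.mp hβ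
  obtain ⟨hβpos, hpβ⟩ := mem_filter.mp hβ
  obtain ⟨hsβpos, hsβα⟩ := hsimple β hβpos hβα
  exact mem_erase.mpr ⟨hsβα, mem_filter.mpr ⟨hsβpos, hpq β hβpos hpβ⟩⟩

lemma sum_erase_filter_comp_reflection
    (hsimple : ∀ β ∈ Φpos, β ≠ α → reflection hαα β ∈ Φpos ∧ reflection hαα β ≠ α)
    {M : Type*} [AddCommMonoid M] {p q : V → Prop}
    [DecidablePred p] [DecidablePred q]
    (hpq : ∀ β ∈ Φpos, p β → q (reflection hαα β))
    (hqp : ∀ β ∈ Φpos, q β → p (reflection hαα β)) (f : V → M) :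
    ∑ β ∈ (Φpos.filter p).erase α, f (reflection hαα β)
      = ∑ β ∈ (Φpos.filter q).erase α, f β :=
  sum_nbij' (reflection hαα) (reflection hαα)
    (fun _ ↦ reflection_mem_erase_filter hαα hsimple hpq)
    (fun _ ↦ reflection_mem_erase_filter hαα hsimple hqp)
    (fun β _ ↦ involutive_reflection hαα β) (fun β _ ↦ involutive_reflection hαα β)
    (fun _ _ ↦ rfl)

end Reflection

section HodgeShift

variable {V : Type*} [AddCommGroup V] [Module ℝ V] {coroot : V → Dual ℝ V} {α : V}
  (hαα : coroot α α = 2) {Φpos : Finset V} {θ : V →ₗ[ℝ] V} {ρℝ : V}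

lemma coroot_apply_eq_one_of_two_smul_eq_sum
    (hsimple : ∀ β ∈ Φpos, β ≠ α → reflection hαα β ∈ Φpos ∧ reflection hαα β ≠ α)
    (hθα : θ α = -α) (hα : α ∈ Φpos)
    (hρ : (2 : ℝ) • ρℝ = ∑ β ∈ Φpos.filter (fun β => θ β = -β), β) : coroot α ρℝ = 1 := by
  have hreal : ∀ β ∈ Φpos, θ β = -β → θ (reflection hαα β) = -reflection hαα β :=
    fun _ _ ↦ apply_reflection_eq_neg_of_apply_eq_neg hαα hθα
  have hrest : ∑ β ∈ (Φpos.filter fun β => θ β = -β).erase α, coroot α β = 0 := by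
    have h := sum_erase_filter_comp_reflection hαα hsimple (p := fun β => θ β = -β) hreal hreal
      (coroot α)
    simp only [apply_reflection_eq_neg hαα, sum_neg_distrib] at h
    linarith
  have h := congrArg (coroot α) hρ
  rw [map_smul, map_sum, ← add_sum_erase _ _ (mem_filter.mpr ⟨hα, hθα⟩), hαα, hrest,
    smul_eq_mul] at h
  linarith

lemma sum_erase_hodgeShift_reflection
    (hsimple : ∀ β ∈ Φpos, β ≠ α → reflection hαα β ∈ Φpos ∧ reflection hαα β ≠ α)
    (hθα : θ α = -α)
    (hco : ∀ β ∈ Φpos, coroot (reflection hαα β) = coroot β - coroot β α • coroot α)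
    (hint : ∀ β ∈ Φpos, ∃ n : ℤ, coroot β α = n) (hρα : coroot α ρℝ = 1) (lambda : V)
    (ε : V → ℝ) :
    ∑ β ∈ (Φpos.filter fun β =>
        θ β = -β ∧ ¬∃ n : ℤ, coroot β (reflection hαα lambda) = n).erase α,
      (-1 : ℝ) ^ ⌊coroot β (reflection hαα lambda + ρℝ)⌋ *
        ((-1 : ℝ) ^ ⌊coroot β α⌋ * ε (reflection hαα β))
      = ∑ β ∈ (Φpos.filter fun β => θ β = -β ∧ ¬∃ n : ℤ, coroot β lambda = n).erase α,
          (-1 : ℝ) ^ ⌊coroot β (lambda + ρℝ)⌋ * ε β := by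
  have hpq : ∀ β ∈ Φpos, (θ β = -β ∧ ¬∃ n : ℤ, coroot β (reflection hαα lambda) = n) →
      θ (reflection hαα β) = -reflection hαα β ∧
        ¬∃ n : ℤ, coroot (reflection hαα β) lambda = n := by
    rintro β hβpos ⟨hθβ, hβ⟩
    refine ⟨apply_reflection_eq_neg_of_apply_eq_neg hαα hθα hθβ, ?_⟩
    rwa [← coroot_apply_reflection hαα (hco β hβpos)]
  have hqp : ∀ β ∈ Φpos, (θ β = -β ∧ ¬∃ n : ℤ, coroot β lambda = n) →
      θ (reflection hαα β) = -reflection hαα β ∧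
        ¬∃ n : ℤ, coroot (reflection hαα β) (reflection hαα lambda) = n := by
    rintro β hβpos ⟨hθβ, hβ⟩
    refine ⟨apply_reflection_eq_neg_of_apply_eq_neg hαα hθα hθβ, ?_⟩
    rwa [← coroot_apply_reflection hαα (hco β hβpos), involutive_reflection]
  refine (sum_congr rfl fun β hβ ↦ ?_).trans (sum_erase_filter_comp_reflection hαα hsimple hpq hqp
    fun γ ↦ (-1 : ℝ) ^ ⌊coroot γ (lambda + ρℝ)⌋ * ε γ)
  have hβpos := (mem_filter.mp (mem_of_mem_erase hβ)).1
  obtain ⟨n, hn⟩ := hint β hβpos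
  rw [← mul_assoc, coroot_apply_reflection_add hαα (hco β hβpos) hρα, hn, Int.floor_intCast,
    neg_one_zpow_floor_add_intCast_mul]

end HodgeShift

theorem hodgeShift_real_nonintegral_reflection_general
    {V : Type*} [AddCommGroup V] [Module ℝ V]
    (Φ Φpos : Finset V) (coroot : V → Module.Dual ℝ V)
    (hpair : ∀ β ∈ Φ, coroot β β = 2)
    (hcrys : ∀ β ∈ Φ, ∀ γ ∈ Φ, ∃ n : ℤ, coroot γ β = (n : ℝ))
    (hcorefl : ∀ β ∈ Φ, ∀ γ ∈ Φ,
      coroot (γ - coroot β γ • β) = coroot γ - coroot γ β • coroot β)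
    (hpossub : Φpos ⊆ Φ)
    (θ : V →ₗ[ℝ] V)
    (ρℝ : V) (hρ : (2 : ℝ) • ρℝ = ∑ β ∈ Φpos.filter (fun β => θ β = -β), β)
    (lambda : V)
    (ε : V → ℝ)
    (hεneg : ∀ β ∈ Φ, θ β = -β → ε (-β) = ε β)
    (α : V) (hα : α ∈ Φpos)
    (hsimple : ∀ β ∈ Φpos, β ≠ α →
      β - coroot α β • α ∈ Φpos ∧ β - coroot α β • α ≠ α)
    (hθα : θ α = -α)
    (hnonint : ¬∃ n : ℤ, coroot α lambda = (n : ℝ)) :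
    hodgeShift Φpos coroot θ ρℝ (lambda - coroot α lambda • α)
        (fun β => (-1 : ℝ) ^ ⌊coroot β α⌋ * ε (β - coroot α β • α))
      = hodgeShift Φpos coroot θ ρℝ lambda ε
        + (-1 : ℝ) ^ ⌊coroot α lambda⌋ * ε α := by
  have hαΦ : α ∈ Φ := hpossub hα
  have hαα : coroot α α = 2 := hpair α hαΦ
  simp only [← reflection_apply (h := hαα)] at hsimple hcorefl ⊢
  have hρα := coroot_apply_eq_one_of_two_smul_eq_sum hαα hsimple hθα hα hρ
  have hc : coroot α lambda ∉ Set.range Int.cast := fun ⟨n, hn⟩ ↦ hnonint ⟨n, hn.symm⟩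
  have hαS' : α ∈ Φpos.filter fun β =>
      θ β = -β ∧ ¬∃ n : ℤ, coroot β (reflection hαα lambda) = n := by
    refine mem_filter.mpr ⟨hα, hθα, fun ⟨n, hn⟩ ↦ hc ⟨-n, ?_⟩⟩
    rw [apply_reflection_eq_neg hαα] at hn
    rw [Int.cast_neg, ← hn, neg_neg]
  unfold hodgeShift
  rw [← add_sum_erase _ _ hαS', ← add_sum_erase _ _ (mem_filter.mpr ⟨hα, hθα, hnonint⟩),
    sum_erase_hodgeShift_reflection hαα hsimple hθα (fun β hβ ↦ hcorefl α hαΦ β (hpossub hβ))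
      (fun β hβ ↦ hcrys α hαΦ β (hpossub hβ)) hρα, map_add, map_add,
    apply_reflection_eq_neg hαα, hρα]
  beta_reduce
  rw [reflection_apply_self, hεneg α hαΦ hθα, hαα, Int.floor_ofNat]
  simp only [neg_one_zpow_floor_add_one, neg_one_zpow_floor_neg hc]
  norm_num
  ring

/-- Let `α ∈ Φ₊` be simple (`s_α` permutes `Φ₊ \ {α}`), with `θ α = -α` and
`⟨λ, α̌⟩ ∉ ℤ`.  Set `ε'(β) = (-1)^⟨α,β̌⟩ ε(s_α β)` for real roots `β`.  Then
`ℓ_H(s_α λ, ε') = ℓ_H(λ, ε) + (-1)^⌊⟨λ,α̌⟩⌋ ε(α)`. -/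
theorem hodgeShift_real_nonintegral_reflection
    {V : Type*} [AddCommGroup V] [Module ℝ V]
    (Φ Φpos : Finset V) (coroot : V → Module.Dual ℝ V)
    (hspan : Submodule.span ℝ (Φ : Set V) = ⊤)
    (hreduced : ∀ β ∈ Φ, ∀ t : ℝ, t • β ∈ Φ → t = 1 ∨ t = -1)
    (hpair : ∀ β ∈ Φ, coroot β β = 2)
    (hcrys : ∀ β ∈ Φ, ∀ γ ∈ Φ, ∃ n : ℤ, coroot γ β = (n : ℝ))
    (hrefl : ∀ β ∈ Φ, ∀ γ ∈ Φ, γ - coroot β γ • β ∈ Φ)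
    (hcorefl : ∀ β ∈ Φ, ∀ γ ∈ Φ,
      coroot (γ - coroot β γ • β) = coroot γ - coroot γ β • coroot β)
    (hpossub : Φpos ⊆ Φ)
    (hposneg : ∀ β ∈ Φ, (β ∈ Φpos ↔ -β ∉ Φpos))
    (θ : V →ₗ[ℝ] V) (hθinv : ∀ v, θ (θ v) = v) (hθΦ : ∀ β ∈ Φ, θ β ∈ Φ)
    (ρℝ : V) (hρ : (2 : ℝ) • ρℝ = ∑ β ∈ Φpos.filter (fun β => θ β = -β), β)
    (lambda : V)
    (ε : V → ℝ)
    (hεpm : ∀ β ∈ Φ, θ β = -β → ε β = 1 ∨ ε β = -1)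
    (hεneg : ∀ β ∈ Φ, θ β = -β → ε (-β) = ε β)
    (α : V) (hα : α ∈ Φpos)
    (hsimple : ∀ β ∈ Φpos, β ≠ α →
      β - coroot α β • α ∈ Φpos ∧ β - coroot α β • α ≠ α)
    (hθα : θ α = -α)
    (hnonint : ¬∃ n : ℤ, coroot α lambda = (n : ℝ)) :
    hodgeShift Φpos coroot θ ρℝ (lambda - coroot α lambda • α)
        (fun β => (-1 : ℝ) ^ ⌊coroot β α⌋ * ε (β - coroot α β • α))
      = hodgeShift Φpos coroot θ ρℝ lambda ε
        + (-1 : ℝ) ^ ⌊coroot α lambda⌋ * ε α :=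
  hodgeShift_real_nonintegral_reflection_general Φ Φpos coroot hpair hcrys hcorefl hpossub θ ρℝ hρ
    lambda ε hεneg α hα hsimple hθα hnonint
end

section
/- Let R be a commutative ring, s ∈ R, and let M ⊆ N be R-modules such that multiplication by s is injective on N. Define an increasing filtration on N/sN by J_n(N) = image of {x ∈ N : sⁿ·x ∈ M} for n ≥ 0, with the convention J_{−1}(N) = 0, and an increasing filtration on M/sM by J_{−n}(M) = image of M ∩ sⁿN for n ≥ 0. Then for every n ≥ 0, the assignment x ↦ sⁿ·x induces a well-defined isomorphism of R-modules J_n(N)/J_{n−1}(N) ≅ J_{−n}(M)/J_{−n−1}(M). -/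
/-!
Both graded pieces are quotients of `A n = {x | sⁿ • x ∈ M}`: of `J_n(N)` through `x ↦ x mod sN`,
and of `J_{-n}(M)` through `x ↦ sⁿ • x mod sM` (every element of `M ∩ sⁿN` is `sⁿ • x` with
`x ∈ A n`). So it suffices that the two kernels agree, i.e. that `x ∈ sN + A (n - 1)` iff
`sⁿ • x ∈ sM + (M ∩ sⁿ⁺¹N)` (with `sN` alone on the left when `n = 0`). From left to right this is a direct computation; from right to left,
`sⁿ • x = s • c + sⁿ⁺¹ • w` with `c ∈ M` gives, after cancelling one `s`, `sⁿ⁻¹ • (x - s • w) = c`.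
-/

open Submodule

section Quotients

variable {R P U V : Type*} [Ring R] [AddCommGroup P] [Module R P] [AddCommGroup U] [Module R U]
  [AddCommGroup V] [Module R V]

theorem LinearMap.exists_linearEquiv_apply_eq_of_ker_eq {f : P →ₗ[R] U} {g : P →ₗ[R] V}
    (hf : Function.Surjective f) (hg : Function.Surjective g) (h : ker f = ker g) :
    ∃ e : U ≃ₗ[R] V, ∀ x, e (f x) = g x := by
  refine ⟨(f.quotKerEquivOfSurjective hf).symm ≪≫ₗ quotEquivOfEq _ _ h ≪≫ₗ
    g.quotKerEquivOfSurjective hg, fun x => ?_⟩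
  rw [← f.quotKerEquivOfSurjective_apply_mk hf]
  simp [LinearMap.quotKerEquivOfSurjective_apply_mk]

theorem LinearMap.exists_quotientEquiv_mk_eq_mk {f : P →ₗ[R] U} {g : P →ₗ[R] V}
    (hf : Function.Surjective f) (hg : Function.Surjective g) (U₀ : Submodule R U)
    (V₀ : Submodule R V) (h : ∀ x, f x ∈ U₀ ↔ g x ∈ V₀) :
    ∃ e : (U ⧸ U₀) ≃ₗ[R] V ⧸ V₀, ∀ x, e (U₀.mkQ (f x)) = V₀.mkQ (g x) := by
  refine exists_linearEquiv_apply_eq_of_ker_eq (f := U₀.mkQ ∘ₗ f) (g := V₀.mkQ ∘ₗ g)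
    ((mkQ_surjective _).comp hf) ((mkQ_surjective _).comp hg) ?_
  ext x
  simpa using h x

theorem Submodule.mkQ_mem_map_mkQ_iff {p q : Submodule R P} {x : P} :
    p.mkQ x ∈ q.map p.mkQ ↔ x ∈ p ⊔ q := by
  rw [← mem_comap, comap_map_mkQ]

end Quotients

section Jantzen

variable {R N : Type*} [CommRing R] [AddCommGroup N] [Module R N] (s : R) (M : Submodule R N)

/-- `x ↦ sᵏ • x`, from `{x | sᵏ • x ∈ M}` onto `M ∩ sᵏ N`. -/
def smulPowInter (k : ℕ) :
    M.comap ((s ^ k) • LinearMap.id) →ₗ[R]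
      (LinearMap.range ((s ^ k) • LinearMap.id : N →ₗ[R] N)).comap M.subtype :=
  LinearMap.codRestrict _
    (LinearMap.codRestrict M ((s ^ k) • LinearMap.id ∘ₗ (M.comap _).subtype) fun x => x.2)
    fun x => ⟨x, rfl⟩

theorem smulPowInter_surjective (k : ℕ) : Function.Surjective (smulPowInter s M k) := by
  rintro ⟨y, w, hw⟩
  refine ⟨⟨w, ?_⟩, Subtype.ext (Subtype.ext hw)⟩
  rw [mem_comap, hw]
  exact y.2

theorem mem_range_smul_iff_mem_sup {y : M} :
    (y : N) ∈ LinearMap.range (s • LinearMap.id : N →ₗ[R] N) ↔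
      y ∈ LinearMap.range (s • LinearMap.id : M →ₗ[R] M) ⊔
        (LinearMap.range ((s ^ 1) • LinearMap.id : N →ₗ[R] N)).comap M.subtype := by
  have hle : LinearMap.range (s • LinearMap.id : M →ₗ[R] M) ≤
      (LinearMap.range ((s ^ 1) • LinearMap.id : N →ₗ[R] N)).comap M.subtype := by
    rintro _ ⟨w, rfl⟩
    exact ⟨w, by simp⟩
  rw [sup_eq_right.mpr hle, mem_comap, pow_one]
  rfl

theorem mem_range_smul_sup_comap_iff (hs : Function.Injective (fun x : N => s • x)) (m : ℕ)
    {x : N} (hx : s ^ (m + 1) • x ∈ M) :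
    x ∈ LinearMap.range (s • LinearMap.id : N →ₗ[R] N) ⊔ M.comap ((s ^ m) • LinearMap.id) ↔
      (⟨s ^ (m + 1) • x, hx⟩ : M) ∈ LinearMap.range (s • LinearMap.id : M →ₗ[R] M) ⊔
        (LinearMap.range ((s ^ (m + 2)) • LinearMap.id : N →ₗ[R] N)).comap M.subtype := by
  simp only [mem_sup, LinearMap.mem_range, mem_comap, LinearMap.smul_apply, LinearMap.id_apply,
    exists_exists_eq_and, subtype_apply]
  constructor
  · rintro ⟨w, a, ha, rfl⟩
    have hw : s ^ (m + 2) • w = s ^ (m + 1) • (s • w + a) - s • s ^ m • a := by module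
    refine ⟨⟨s ^ m • a, ha⟩, ⟨s ^ (m + 2) • w, hw ▸ M.sub_mem hx (M.smul_mem s ha)⟩, ⟨w, rfl⟩, ?_⟩
    ext
    simp only [coe_add, coe_smul]
    module
  · rintro ⟨c, z, ⟨w, hw⟩, hsum⟩
    have hsum' : s • (c : N) + s ^ (m + 2) • w = s ^ (m + 1) • x := by
      rw [hw]; exact congrArg Subtype.val hsum
    have hcancel : (c : N) + s ^ (m + 1) • w = s ^ m • x :=
      hs (by simp only; linear_combination (norm := module) hsum')
    refine ⟨w, x - s • w, ?_, by abel⟩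
    have : s ^ m • (x - s • w) = c := by linear_combination (norm := module) -hcancel
    exact this ▸ c.2

end Jantzen

/-- Let `R` be a commutative ring, `s ∈ R`, and `M ⊆ N` `R`-modules such that
multiplication by `s` is injective on `N`.  Define the Jantzen filtrations
`J_n(N) = image in N/sN of {x ∈ N : sⁿ x ∈ M}` (`n ≥ 0`, with `J_{-1}(N) = 0`) and
`J_{-n}(M) = image in M/sM of M ∩ sⁿN` (`n ≥ 0`).  Then for every `n ≥ 0`, `x ↦ sⁿ x`
induces a well-defined isomorphism `J_n(N)/J_{n-1}(N) ≅ J_{-n}(M)/J_{-n-1}(M)`. -/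
theorem jantzen_graded_pieces_iso
    {R : Type*} [CommRing R] {N : Type*} [AddCommGroup N] [Module R N]
    (s : R) (M : Submodule R N)
    (hs : Function.Injective (fun x : N => s • x)) (n : ℕ) :
    -- `sN` and `sM`
    ∀ (sN : Submodule R N), sN = LinearMap.range (s • (LinearMap.id : N →ₗ[R] N)) →
    ∀ (sM : Submodule R ↥M), sM = LinearMap.range (s • (LinearMap.id : ↥M →ₗ[R] ↥M)) →
    -- `A k = {x ∈ N : s^k • x ∈ M}`, so that `J_k(N)` is the image of `A k` in `N/sN`
    ∀ (A : ℕ → Submodule R N),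
      (∀ k, A k = Submodule.comap ((s ^ k) • (LinearMap.id : N →ₗ[R] N)) M) →
    ∀ (JN : ℕ → Submodule R (N ⧸ sN)), (∀ k, JN k = Submodule.map sN.mkQ (A k)) →
    -- `JM k` is the image of `M ∩ s^k N` in `M/sM`, i.e. `J_{-k}(M)`
    ∀ (JM : ℕ → Submodule R (↥M ⧸ sM)),
      (∀ k, JM k = Submodule.map sM.mkQ (Submodule.comap M.subtype
        (LinearMap.range ((s ^ k) • (LinearMap.id : N →ₗ[R] N))))) →
    ∀ (JNprev : Submodule R (N ⧸ sN)),
      (n = 0 → JNprev = ⊥) → (∀ m : ℕ, n = m + 1 → JNprev = JN m) →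
    ∃ e : (↥(JN n) ⧸ Submodule.comap (JN n).subtype JNprev) ≃ₗ[R]
          (↥(JM n) ⧸ Submodule.comap (JM n).subtype (JM (n + 1))),
      ∀ (x : N) (hx : x ∈ A n) (h1 : sN.mkQ x ∈ JN n)
        (y : ↥M) (hy : (y : N) = s ^ n • x) (h2 : sM.mkQ y ∈ JM n),
        e (Submodule.Quotient.mk ⟨sN.mkQ x, h1⟩) =
          Submodule.Quotient.mk ⟨sM.mkQ y, h2⟩ := by
  rintro sN hsN sM hsM A hA JN hJN JM hJM JNprev h0 hsucc
  obtain rfl := funext hA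
  obtain rfl := funext hJN
  obtain rfl := funext hJM
  have hprev (x : N) (hx : s ^ n • x ∈ M) : sN.mkQ x ∈ JNprev ↔ (⟨s ^ n • x, hx⟩ : M) ∈
      sM ⊔ (LinearMap.range ((s ^ (n + 1)) • LinearMap.id : N →ₗ[R] N)).comap M.subtype := by
    subst hsN hsM
    cases n with
    | zero =>
      rw [h0 rfl, mem_bot, mkQ_apply, Quotient.mk_eq_zero, ← mem_range_smul_iff_mem_sup]
      simp
    | succ m =>
      rw [hsucc m rfl, mkQ_mem_map_mkQ_iff, mem_range_smul_sup_comap_iff s M hs]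
  obtain ⟨e, he⟩ := LinearMap.exists_quotientEquiv_mk_eq_mk
    (f := sN.mkQ.submoduleMap _) (g := sM.mkQ.submoduleMap _ ∘ₗ smulPowInter s M n)
    (LinearMap.submoduleMap_surjective _ _)
    ((LinearMap.submoduleMap_surjective _ _).comp (smulPowInter_surjective s M n))
    (JNprev.comap (Submodule.subtype _)) ((map sM.mkQ _).comap (Submodule.subtype _))
    fun x => (hprev x x.2).trans mkQ_mem_map_mkQ_iff.symm
  refine ⟨e, fun x hx h1 y hy h2 => ?_⟩
  obtain rfl : y = ⟨s ^ n • x, hx⟩ := Subtype.ext hy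
  exact he ⟨x, hx⟩
end

section
/- Let A be a multiplicatively written abelian group containing an element v of infinite order; set u = v². Let D: A → A be a group homomorphism with D ∘ D = id and D(v) = v^{−1}, extended to a ring involution of the integral group ring ℤ[A], and let |·|: A → ℝ_{>0} be a group homomorphism (a multiplicative norm) with |u| > 1 and |D(a)| = |a|^{−1} for all a ∈ A. Let Γ be a finite set with a partial order ≤ and a function ℓ_I: Γ → ℤ, let M be the free ℤ[A]-module with basis {B_γ}_{γ ∈ Γ}, and let D_M: M → M be an additive map satisfying D_M(a·m) = D(a)·D_M(m) for all a ∈ A, m ∈ M, and D_M(B_γ) = u^{−ℓ_I(γ)}·(B_γ + Σ_{γ' < γ} R_{γ'γ} B_{γ'}) with coefficients R_{γ'γ} ∈ ℤ[A]. Then for each γ ∈ Γ there is at most one element C_γ ∈ M such that D_M(C_γ) = u^{−ℓ_I(γ)}·C_γ and C_γ = B_γ + Σ_{γ' < γ} P_{γ'γ} B_{γ'}, where each coefficient P_{γ'γ} is a ℤ-linear combination of elements a ∈ A with |a| ≤ |u|^{(ℓ_I(γ) − ℓ_I(γ') − 1)/2}. -/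
open Finset
open scoped Classical

/-!
Two such elements differ by `E = ∑_{δ < γ} Q_δ B_δ` with `DM E = u^{-ℓI γ} E`. If `E ≠ 0`, pick `δ`
maximal with `Q_δ ≠ 0`; triangularity of `DM` makes the `δ`-coefficient of this equation read
`D(Q_δ) u^{-ℓI δ} = u^{-ℓI γ} Q_δ`. So the support of `Q_δ` contains, with each `a`, the element
`u^{ℓI γ - ℓI δ} D(a)`, and as `ν (D a) = (ν a)⁻¹` the two norms multiply to `ν u ^ (ℓI γ - ℓI δ)`.
The bound on the coefficients caps that product by `ν u ^ (ℓI γ - ℓI δ - 1)`, which is smaller since `ν u > 1`.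
-/

theorem map_zpow_of_map_mul {G G₀ : Type*} [Group G] [GroupWithZero G₀] (f : G → G₀)
    (hmul : ∀ a b, f (a * b) = f a * f b) (hne : ∀ a, f a ≠ 0) (a : G) (n : ℤ) :
    f (a ^ n) = f a ^ n := by
  let φ : G →* G₀ˣ :=
    MonoidHom.mk' (fun a => Units.mk0 (f a) (hne a)) fun a b => Units.ext (hmul a b)
  simpa [φ, Units.val_zpow_eq_zpow_val] using congrArg Units.val (map_zpow φ a n)

theorem mul_lt_rpow_of_le_rpow_sub_one_div_two {r x y s : ℝ} (hr : 1 < r)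
    (hx : x ≤ r ^ ((s - 1) / 2)) (hy : y ≤ r ^ ((s - 1) / 2)) (hy₀ : 0 ≤ y) : x * y < r ^ s :=
  calc x * y ≤ r ^ ((s - 1) / 2) * r ^ ((s - 1) / 2) :=
        mul_le_mul hx hy hy₀ (Real.rpow_nonneg (by linarith) _)
    _ = r ^ (s - 1) := by rw [← Real.rpow_add (by linarith)]; ring_nf
    _ < r ^ s := Real.rpow_lt_rpow_of_exponent_lt hr (by linarith)

namespace MonoidAlgebra

variable {G H M N : Type*} [Monoid G] [Monoid H] [AddCommGroup M] [Module (MonoidAlgebra ℤ G) M]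
  [AddCommGroup N] [Module (MonoidAlgebra ℤ H) N]

def semilinearMapOfMapSingleOneSMul (σ : G →* H) (F : M →+ N)
    (hF : ∀ a m, F (single a (1 : ℤ) • m) = single (σ a) (1 : ℤ) • F m) :
    M →ₛₗ[mapDomainRingHom ℤ σ] N where
  toFun := F
  map_add' := F.map_add
  map_smul' q m := by
    induction q using MonoidAlgebra.induction_linear with
    | zero => simp
    | add p q hp hq => simp only [add_smul, map_add, hp, hq]
    | single a n =>
      change F (single a n • m) = mapDomain σ (single a n) • F m
      rw [mapDomain_single, ← mul_one n, ← smul_single', ← smul_single', smul_assoc, map_zsmul,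
        hF, smul_assoc]

variable {k A : Type*} [Semiring k] [CommGroup A]

theorem mul_mul_mem_support_of_mapDomain_mul_single_eq {D : A →* A} (hD : Function.Injective D)
    {q : MonoidAlgebra k A} {x y : A}
    (heq : mapDomainRingHom k D q * single x 1 = single y 1 * q) {a : A}
    (ha : a ∈ q.coeff.support) : y⁻¹ * x * D a ∈ q.coeff.support := by
  have hcoeff := congrArg (fun p : MonoidAlgebra k A => p.coeff (x * D a)) heq
  simp only [coeff_mul_single_apply, coeff_single_mul_apply, mul_one, one_mul,
    mul_inv_cancel_comm, mapDomainRingHom_apply, coeff_mapDomain,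
    Finsupp.mapDomain_apply hD] at hcoeff
  rw [Finsupp.mem_support_iff, mul_assoc, ← hcoeff]
  exact Finsupp.mem_support_iff.mp ha

theorem eq_zero_of_mapDomain_mul_single_eq {D : A →* A} (hD : Function.Injective D)
    {ν : A → ℝ} (hν : ∀ a b, ν (a * b) = ν a * ν b) (hνpos : ∀ a, 0 < ν a)
    (hνD : ∀ a, ν (D a) = (ν a)⁻¹) {u : A} (hνu : 1 < ν u) {d e : ℤ} {q : MonoidAlgebra k A}
    (hbound : ∀ a ∈ q.coeff.support, ν a ≤ ν u ^ (((d : ℝ) - e - 1) / 2))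
    (heq : mapDomainRingHom k D q * single (u ^ (-e)) 1 = single (u ^ (-d)) 1 * q) : q = 0 := by
  by_contra hq
  obtain ⟨a, ha⟩ := Finsupp.support_nonempty_iff.mpr (mt coeff_eq_zero.mp hq)
  have hb := mul_mul_mem_support_of_mapDomain_mul_single_eq hD heq ha
  have hprod : ν a * ν ((u ^ (-d))⁻¹ * u ^ (-e) * D a) = ν u ^ ((d : ℝ) - e) := by
    rw [← zpow_neg, ← zpow_add, hν, hνD, map_zpow_of_map_mul ν hν (fun a => (hνpos a).ne'),
      mul_left_comm, mul_inv_cancel₀ (hνpos a).ne', mul_one, ← Real.rpow_intCast]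
    push_cast
    ring_nf
  exact (mul_lt_rpow_of_le_rpow_sub_one_div_two hνu (hbound a ha) (hbound _ hb)
    (hνpos _).le).ne hprod

end MonoidAlgebra

section Triangular

variable {R Γ : Type*} [Semiring R] [Fintype Γ] [PartialOrder Γ]

theorem sum_filter_lt_smul_single_one_apply (γ δ : Γ) (P : Γ → R) :
    (∑ γ' ∈ univ.filter (fun γ' => γ' < γ), P γ' • Finsupp.single γ' (1 : R)) δ =
      if δ < γ then P δ else 0 := by
  simp [Finsupp.finsetSum_apply, Finsupp.single_apply]

theorem semilinearMap_apply_of_forall_gt_eq_zero {σ : R →+* R}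
    (F : (Γ →₀ R) →ₛₗ[σ] (Γ →₀ R)) (c : Γ → R)
    (htri : ∀ γ : Γ, ∃ Q : Γ → R, F (Finsupp.single γ 1) = c γ •
      (Finsupp.single γ 1 + ∑ γ' ∈ univ.filter (fun γ' => γ' < γ), Q γ' • Finsupp.single γ' 1))
    (E : Γ →₀ R) {δ : Γ} (hδ : ∀ δ', δ < δ' → E δ' = 0) : F E δ = σ (E δ) * c δ := by
  choose Q hQ using htri
  have hE : E = ∑ δ', E δ' • Finsupp.single δ' 1 := by
    simp only [Finsupp.smul_single_one, Finsupp.univ_sum_single]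
  have hcol : ∀ δ', F (Finsupp.single δ' 1) δ =
      c δ' * (Finsupp.single δ' 1 δ + if δ < δ' then Q δ' δ else 0) := fun δ' => by
    rw [hQ, Finsupp.smul_apply, smul_eq_mul, Finsupp.add_apply, sum_filter_lt_smul_single_one_apply]
  conv_lhs => rw [hE]
  simp only [map_sum, map_smulₛₗ, Finsupp.finsetSum_apply, Finsupp.smul_apply, smul_eq_mul]
  rw [Finset.sum_eq_single δ (fun δ' _ hne => ?_) (by simp), hcol]
  · simp
  by_cases hlt : δ < δ'
  · simp [hδ δ' hlt]
  · simp [hcol, hlt, Finsupp.single_eq_of_ne' hne]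

end Triangular

theorem kazhdan_lusztig_basis_unique_general
    {A : Type*} [CommGroup A] (v : A)
    (D : A →* A) (hDD : ∀ a, D (D a) = a)
    (ν : A → ℝ) (hν : ∀ a b, ν (a * b) = ν a * ν b) (hνpos : ∀ a, 0 < ν a)
    (hνu : 1 < ν (v ^ 2)) (hνD : ∀ a, ν (D a) = (ν a)⁻¹)
    {Γ : Type*} [Fintype Γ] [PartialOrder Γ] (ℓI : Γ → ℤ)
    (DM : (Γ →₀ MonoidAlgebra ℤ A) → (Γ →₀ MonoidAlgebra ℤ A))
    (hDMadd : ∀ x y, DM (x + y) = DM x + DM y)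
    (hDMsmul : ∀ (a : A) (m : Γ →₀ MonoidAlgebra ℤ A),
      DM (MonoidAlgebra.single a (1 : ℤ) • m) = MonoidAlgebra.single (D a) (1 : ℤ) • DM m)
    (hDMtri : ∀ γ : Γ, ∃ R : Γ → MonoidAlgebra ℤ A,
      DM (Finsupp.single γ 1) = MonoidAlgebra.single ((v ^ 2) ^ (-ℓI γ)) (1 : ℤ) •
        (Finsupp.single γ (1 : MonoidAlgebra ℤ A)
          + ∑ γ' ∈ univ.filter (fun γ' => γ' < γ),
              R γ' • Finsupp.single γ' (1 : MonoidAlgebra ℤ A)))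
    (γ : Γ) (C C' : Γ →₀ MonoidAlgebra ℤ A)
    (hC : DM C = MonoidAlgebra.single ((v ^ 2) ^ (-ℓI γ)) (1 : ℤ) • C)
    (hC' : DM C' = MonoidAlgebra.single ((v ^ 2) ^ (-ℓI γ)) (1 : ℤ) • C')
    (hPC : ∃ P : Γ → MonoidAlgebra ℤ A,
      C = Finsupp.single γ (1 : MonoidAlgebra ℤ A)
          + ∑ γ' ∈ univ.filter (fun γ' => γ' < γ),
              P γ' • Finsupp.single γ' (1 : MonoidAlgebra ℤ A)
        ∧ ∀ γ' : Γ, γ' < γ → ∀ a ∈ (P γ').coeff.support,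
            ν a ≤ (ν (v ^ 2)) ^ (((ℓI γ : ℝ) - (ℓI γ' : ℝ) - 1) / 2))
    (hPC' : ∃ P : Γ → MonoidAlgebra ℤ A,
      C' = Finsupp.single γ (1 : MonoidAlgebra ℤ A)
          + ∑ γ' ∈ univ.filter (fun γ' => γ' < γ),
              P γ' • Finsupp.single γ' (1 : MonoidAlgebra ℤ A)
        ∧ ∀ γ' : Γ, γ' < γ → ∀ a ∈ (P γ').coeff.support,
            ν a ≤ (ν (v ^ 2)) ^ (((ℓI γ : ℝ) - (ℓI γ' : ℝ) - 1) / 2)) :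
    C = C' := by
  obtain ⟨P, hCP, hP⟩ := hPC
  obtain ⟨P', hC'P', hP'⟩ := hPC'
  let F := MonoidAlgebra.semilinearMapOfMapSingleOneSMul D (AddMonoidHom.mk' DM hDMadd) hDMsmul
  have hE : ∀ δ, (C - C') δ = if δ < γ then P δ - P' δ else 0 := fun δ => by
    simp only [hCP, hC'P', Finsupp.sub_apply, Finsupp.add_apply,
      sum_filter_lt_smul_single_one_apply]
    split_ifs <;> abel
  have hFE : F (C - C') = MonoidAlgebra.single ((v ^ 2) ^ (-ℓI γ)) (1 : ℤ) • (C - C') := by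
    rw [map_sub, smul_sub]
    exact congrArg₂ _ hC hC'
  by_contra hne
  obtain ⟨δ, hδ⟩ := (C - C').support.exists_maximal
    (Finsupp.support_nonempty_iff.mpr (sub_ne_zero.mpr hne))
  have hδγ : δ < γ := by
    by_contra h
    exact Finsupp.mem_support_iff.mp hδ.prop (by rw [hE, if_neg h])
  have hcoeff := semilinearMap_apply_of_forall_gt_eq_zero F _ hDMtri (C - C')
    (fun δ' hlt => Finsupp.notMem_support_iff.mp fun h => hδ.not_gt h hlt)
  rw [hFE, Finsupp.smul_apply, smul_eq_mul] at hcoeff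
  have hbound : ∀ a ∈ ((C - C') δ).coeff.support,
      ν a ≤ ν (v ^ 2) ^ (((ℓI γ : ℝ) - ℓI δ - 1) / 2) := fun a ha => by
    rw [hE, if_pos hδγ] at ha
    rcases Finset.mem_union.mp (Finsupp.support_sub ha) with ha | ha
    exacts [hP δ hδγ a ha, hP' δ hδγ a ha]
  exact Finsupp.mem_support_iff.mp hδ.prop <|
    MonoidAlgebra.eq_zero_of_mapDomain_mul_single_eq (Function.LeftInverse.injective hDD) hν hνpos
      hνD hνu hbound hcoeff.symm

/-- (Uniqueness in the Kazhdan–Lusztig yoga, Proposition 5.10 of the paper.)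
Let `A` be a multiplicative abelian group with an element `v` of infinite order, `u = v²`,
`D : A → A` an involutive homomorphism with `D v = v⁻¹`, and `ν : A → ℝ_{>0}` a multiplicative
norm with `ν u > 1` and `ν (D a) = (ν a)⁻¹`.  Let `Γ` be a finite poset, `ℓI : Γ → ℤ`,
`M` the free `ℤ[A]`-module on `{B_γ}`, and `DM : M → M` additive with
`DM (a • m) = D a • DM m` and `DM B_γ = u^{-ℓI γ} • (B_γ + Σ_{γ' < γ} R_{γ'γ} • B_{γ'})`.
Then for each `γ` there is at most one `C_γ` with `DM C_γ = u^{-ℓI γ} • C_γ` and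
`C_γ = B_γ + Σ_{γ' < γ} P_{γ'γ} • B_{γ'}` where each `P_{γ'γ}` is a `ℤ`-linear combination
of elements `a ∈ A` with `ν a ≤ (ν u)^{(ℓI γ - ℓI γ' - 1)/2}`. -/
theorem kazhdan_lusztig_basis_unique
    {A : Type*} [CommGroup A] (v : A)
    (hv : ∀ m : ℤ, v ^ m = 1 → m = 0)
    (D : A →* A) (hDD : ∀ a, D (D a) = a) (hDv : D v = v⁻¹)
    (ν : A → ℝ) (hν : ∀ a b, ν (a * b) = ν a * ν b) (hνpos : ∀ a, 0 < ν a)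
    (hνu : 1 < ν (v ^ 2)) (hνD : ∀ a, ν (D a) = (ν a)⁻¹)
    {Γ : Type*} [Fintype Γ] [PartialOrder Γ] (ℓI : Γ → ℤ)
    (DM : (Γ →₀ MonoidAlgebra ℤ A) → (Γ →₀ MonoidAlgebra ℤ A))
    (hDMadd : ∀ x y, DM (x + y) = DM x + DM y)
    (hDMsmul : ∀ (a : A) (m : Γ →₀ MonoidAlgebra ℤ A),
      DM (MonoidAlgebra.single a (1 : ℤ) • m) = MonoidAlgebra.single (D a) (1 : ℤ) • DM m)
    (hDMtri : ∀ γ : Γ, ∃ R : Γ → MonoidAlgebra ℤ A,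
      DM (Finsupp.single γ 1) = MonoidAlgebra.single ((v ^ 2) ^ (-ℓI γ)) (1 : ℤ) •
        (Finsupp.single γ (1 : MonoidAlgebra ℤ A)
          + ∑ γ' ∈ univ.filter (fun γ' => γ' < γ),
              R γ' • Finsupp.single γ' (1 : MonoidAlgebra ℤ A)))
    (γ : Γ) (C C' : Γ →₀ MonoidAlgebra ℤ A)
    (hC : DM C = MonoidAlgebra.single ((v ^ 2) ^ (-ℓI γ)) (1 : ℤ) • C)
    (hC' : DM C' = MonoidAlgebra.single ((v ^ 2) ^ (-ℓI γ)) (1 : ℤ) • C')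
    (hPC : ∃ P : Γ → MonoidAlgebra ℤ A,
      C = Finsupp.single γ (1 : MonoidAlgebra ℤ A)
          + ∑ γ' ∈ univ.filter (fun γ' => γ' < γ),
              P γ' • Finsupp.single γ' (1 : MonoidAlgebra ℤ A)
        ∧ ∀ γ' : Γ, γ' < γ → ∀ a ∈ (P γ').coeff.support,
            ν a ≤ (ν (v ^ 2)) ^ (((ℓI γ : ℝ) - (ℓI γ' : ℝ) - 1) / 2))
    (hPC' : ∃ P : Γ → MonoidAlgebra ℤ A,
      C' = Finsupp.single γ (1 : MonoidAlgebra ℤ A)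
          + ∑ γ' ∈ univ.filter (fun γ' => γ' < γ),
              P γ' • Finsupp.single γ' (1 : MonoidAlgebra ℤ A)
        ∧ ∀ γ' : Γ, γ' < γ → ∀ a ∈ (P γ').coeff.support,
            ν a ≤ (ν (v ^ 2)) ^ (((ℓI γ : ℝ) - (ℓI γ' : ℝ) - 1) / 2)) :
    C = C' :=
  kazhdan_lusztig_basis_unique_general v D hDD ν hν hνpos hνu hνD ℓI DM hDMadd hDMsmul hDMtri γ C C'
    hC hC' hPC hPC'
end

section
/- Let k be a field, V a k-vector space, and f: V → V a nilpotent k-linear endomorphism. For n ∈ ℤ let M_n(V,f) = Σ_{i,j ∈ ℕ, j−i=n} (range(f^i) ∩ ker(f^{j+1})), and let I_n = range(f^{−n}) for n ≤ 0 and I_n = V for n ≥ 0. Then for every n ∈ ℤ one has ker(f) ∩ I_n = ker(f) ∩ M_n(V,f). -/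
/-!
Each summand `range (f^i) ⊓ ker (f^(j+1))` of `M n` with `j - i = n < 0` has `i ≥ -n`, so lies
in `range (f^(-n))`. Conversely `ker f ⊆ ker (f^(j+1))`, so `ker f ⊓ range (f^m)` is contained
in the summand `(i, j) = (m, 0)` of `M (-m)`, and for `n ≥ 0` all of `ker f` is contained in the
summand `(i, j) = (0, n)`.
-/

/-- The explicit (Beilinson-style) formula for the monodromy weight filtration of a nilpotent
endomorphism `f`: `M n = Σ_{i,j ∈ ℕ, j - i = n} (range (f^i) ⊓ ker (f^(j+1)))`. -/
noncomputable def monodromyFiltration {k V : Type*} [Field k] [AddCommGroup V] [Module k V]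
    (f : V →ₗ[k] V) (n : ℤ) : Submodule k V :=
  ⨆ (i : ℕ) (j : ℕ) (_ : (j : ℤ) - (i : ℤ) = n),
    (LinearMap.range (f ^ i) ⊓ LinearMap.ker (f ^ (j + 1)))

namespace Module.End

variable {R M : Type*} [Semiring R] [AddCommMonoid M] [Module R M]

theorem ker_le_ker_pow_succ (f : Module.End R M) (j : ℕ) :
    LinearMap.ker f ≤ LinearMap.ker (f ^ (j + 1)) := by
  rw [pow_succ, mul_eq_comp]
  exact LinearMap.ker_le_ker_comp f (f ^ j)

theorem range_pow_le_range_pow {f : Module.End R M} {m i : ℕ} (h : m ≤ i) :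
    LinearMap.range (f ^ i) ≤ LinearMap.range (f ^ m) := by
  obtain ⟨d, rfl⟩ := Nat.exists_eq_add_of_le h
  rw [pow_add, mul_eq_comp]
  exact LinearMap.range_comp_le_range (f ^ d) (f ^ m)

end Module.End

section monodromyFiltration

variable {k V : Type*} [Field k] [AddCommGroup V] [Module k V] (f : V →ₗ[k] V)

theorem range_inf_ker_le_monodromyFiltration {i j : ℕ} {n : ℤ} (h : (j : ℤ) - i = n) :
    LinearMap.range (f ^ i) ⊓ LinearMap.ker (f ^ (j + 1)) ≤ monodromyFiltration f n :=
  le_iSup₂_of_le i j (le_iSup_of_le h le_rfl)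

theorem monodromyFiltration_le_range_pow {m : ℕ} {n : ℤ} (h : n ≤ -m) :
    monodromyFiltration f n ≤ LinearMap.range (f ^ m) :=
  iSup₂_le fun i _ ↦ iSup_le fun hij ↦
    inf_le_left.trans (Module.End.range_pow_le_range_pow (by omega))

theorem ker_le_monodromyFiltration {n : ℤ} (hn : 0 ≤ n) :
    LinearMap.ker f ≤ monodromyFiltration f n := by
  have : LinearMap.ker f ≤ LinearMap.range (f ^ 0) ⊓ LinearMap.ker (f ^ (n.toNat + 1)) :=
    le_inf (by simp [Module.End.one_eq_id]) (Module.End.ker_le_ker_pow_succ f _)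
  exact this.trans (range_inf_ker_le_monodromyFiltration f (by omega))

theorem ker_inf_range_pow_le_monodromyFiltration (m : ℕ) :
    LinearMap.ker f ⊓ LinearMap.range (f ^ m) ≤ monodromyFiltration f (-m) := by
  have : LinearMap.ker f ⊓ LinearMap.range (f ^ m) ≤
      LinearMap.range (f ^ m) ⊓ LinearMap.ker (f ^ (0 + 1)) :=
    le_inf inf_le_right (inf_le_left.trans (Module.End.ker_le_ker_pow_succ f 0))
  exact this.trans (range_inf_ker_le_monodromyFiltration f (by omega))

end monodromyFiltration

theorem ker_inf_imageFiltration_eq_ker_inf_monodromyFiltration_general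
    {k V : Type*} [Field k] [AddCommGroup V] [Module k V]
    (f : V →ₗ[k] V) (n : ℤ) :
    LinearMap.ker f ⊓ (if n < 0 then LinearMap.range (f ^ (-n).toNat) else ⊤)
      = LinearMap.ker f ⊓ monodromyFiltration f n := by
  split_ifs with hn
  · obtain ⟨m, rfl⟩ : ∃ m : ℕ, n = -m := ⟨(-n).toNat, by omega⟩
    rw [neg_neg, Int.toNat_natCast]
    exact le_antisymm (le_inf inf_le_left (ker_inf_range_pow_le_monodromyFiltration f m))
      (inf_le_inf_left _ (monodromyFiltration_le_range_pow f le_rfl))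
  · rw [inf_top_eq, left_eq_inf]
    exact ker_le_monodromyFiltration f (by omega)

/-- For a nilpotent endomorphism `f` of a vector space `V`, with
`I n = range (f^(-n))` for `n ≤ 0` and `I n = V` for `n ≥ 0`, one has
`ker f ⊓ I n = ker f ⊓ M n` for every `n : ℤ`, where `M` is the monodromy weight filtration. -/
theorem ker_inf_imageFiltration_eq_ker_inf_monodromyFiltration
    {k V : Type*} [Field k] [AddCommGroup V] [Module k V]
    (f : V →ₗ[k] V) (hf : IsNilpotent f) (n : ℤ) :
    LinearMap.ker f ⊓ (if n < 0 then LinearMap.range (f ^ (-n).toNat) else ⊤)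
      = LinearMap.ker f ⊓ monodromyFiltration f n :=
  ker_inf_imageFiltration_eq_ker_inf_monodromyFiltration_general f n
end

section
/- Let k be a field, V a finite-dimensional k-vector space, B: V × V → k a nondegenerate symmetric bilinear form, and f: V → V a nilpotent endomorphism which is self-adjoint with respect to B, i.e. B(f(x), y) = B(x, f(y)) for all x, y. For n ∈ ℤ let M_n(V,f) = Σ_{i,j ∈ ℕ, j−i=n} (range(f^i) ∩ ker(f^{j+1})). Then for every n ∈ ℤ, the B-orthogonal complement of M_n(V,f) equals M_{−n−1}(V,f). -/
/-!
Self-adjointness of `f` makes `M (-n-1)` orthogonal to `M n`, so it suffices to show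
`dim V ≤ dim M n + dim M (-n-1)`. As a `k[X]`-module via `f`, `V` is a product of cyclic
modules `k[X] ⧸ I`, on each of which `X` is a single nilpotent Jordan block of size `m`, so
`dim ker X^a = min a m`. Since `f^i` maps `ker f^(i+j+1)` onto `range f^i ⊓ ker f^(j+1)`
with kernel `ker f^i`, a single well-chosen term of `M n` and one of `M (-n-1)` already have
dimensions adding up to `m` on each block.
-/

universe u

open Module Polynomial LinearMap

section Functoriality

variable {k V W : Type*} [Field k] [AddCommGroup V] [Module k V] [AddCommGroup W] [Module k W]

theorem range_inf_ker_le_monodromyFiltration_s9 (f : End k V) {n : ℤ} {i j : ℕ}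
    (hij : (j : ℤ) - i = n) : range (f ^ i) ⊓ ker (f ^ (j + 1)) ≤ monodromyFiltration f n :=
  le_iSup_of_le i <| le_iSup_of_le j <| le_iSup_of_le hij le_rfl

theorem map_monodromyFiltration_le {f : End k V} {g : End k W} (φ : W →ₗ[k] V)
    (h : f ∘ₗ φ = φ ∘ₗ g) (n : ℤ) :
    (monodromyFiltration g n).map φ ≤ monodromyFiltration f n := by
  simp only [monodromyFiltration, Submodule.map_iSup]
  refine iSup_le fun i => iSup_le fun j => iSup_le fun hij => ?_
  refine (Submodule.map_inf_le φ).trans <|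
    (inf_le_inf ?_ ?_).trans (range_inf_ker_le_monodromyFiltration_s9 f hij)
  · rw [← range_comp, ← Module.End.commute_pow_left_of_commute h]
    exact range_comp_le_range _ _
  · rw [Submodule.map_le_iff_le_comap, ← ker_comp, Module.End.commute_pow_left_of_commute h]
    exact ker_le_ker_comp _ _

theorem isNilpotent_of_injective_of_comp_eq {f : End k V} {g : End k W} {φ : W →ₗ[k] V}
    (hφ : Function.Injective φ) (h : f ∘ₗ φ = φ ∘ₗ g) (hf : IsNilpotent f) :
    IsNilpotent g := by
  obtain ⟨N, hN⟩ := hf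
  refine ⟨N, LinearMap.ext fun x => hφ ?_⟩
  simpa [hN] using (congr($(Module.End.commute_pow_left_of_commute h N) x)).symm

end Functoriality

section Orthogonality

variable {k V : Type*} [Field k] [AddCommGroup V] [Module k V] {B : LinearMap.BilinForm k V}
  {f : End k V}

theorem LinearMap.IsAdjointPair.pow (hf : IsAdjointPair B B f f) :
    ∀ p : ℕ, IsAdjointPair B B ⇑(f ^ p) ⇑(f ^ p)
  | 0 => isAdjointPair_one
  | p + 1 => by simpa only [← pow_succ, ← pow_succ'] using (hf.pow p).mul hf

theorem apply_eq_zero_of_mem_ker_of_mem_range (hf : IsAdjointPair B B f f) {a b : ℕ}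
    (hab : a ≤ b) {x y : V} (hx : x ∈ ker (f ^ a)) (hy : y ∈ range (f ^ b)) : B x y = 0 := by
  obtain ⟨z, rfl⟩ := hy
  rw [← hf.pow b, Module.End.pow_map_zero_of_le hab hx, map_zero, LinearMap.zero_apply]

theorem apply_eq_zero_of_mem_range_of_mem_ker (hf : IsAdjointPair B B f f) {a b : ℕ}
    (hab : a ≤ b) {x y : V} (hx : x ∈ range (f ^ b)) (hy : y ∈ ker (f ^ a)) : B x y = 0 := by
  obtain ⟨z, rfl⟩ := hx
  rw [hf.pow b, Module.End.pow_map_zero_of_le hab hy, map_zero]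

theorem monodromyFiltration_le_orthogonal (hf : IsAdjointPair B B f f) (n : ℤ) :
    monodromyFiltration f (-n - 1) ≤ B.orthogonal (monodromyFiltration f n) := by
  refine iSup_le fun i' => iSup_le fun j' => iSup_le fun hij' => ?_
  rintro x ⟨hx_range, hx_ker⟩
  suffices monodromyFiltration f n ≤ ker (B.flip x) from
    LinearMap.BilinForm.mem_orthogonal_iff.2 fun y hy => this hy
  refine iSup_le fun i => iSup_le fun j => iSup_le fun hij => ?_
  rintro y ⟨hy_range, hy_ker⟩
  -- `i + i' = j + j' + 1`, so one of the two range exponents exceeds the opposite kernel exponent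
  rcases le_or_gt (j + 1) i' with h | h
  · exact apply_eq_zero_of_mem_ker_of_mem_range hf h hy_ker hx_range
  · exact apply_eq_zero_of_mem_range_of_mem_ker hf (by omega) hy_range hx_ker

end Orthogonality

section KernelDimension

variable {k W : Type*} [Field k] [AddCommGroup W] [Module k W] [FiniteDimensional k W]
  (g : End k W)

theorem finrank_ker_pow_add_le (a b : ℕ) :
    finrank k (ker (g ^ (a + b))) ≤
      finrank k (range (g ^ a) ⊓ ker (g ^ b) : Submodule k W) + finrank k (ker (g ^ a)) := by
  set φ := (g ^ a).domRestrict (ker (g ^ (a + b)))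
  have hrange : range φ ≤ range (g ^ a) ⊓ ker (g ^ b) := by
    rw [range_domRestrict]
    refine le_inf LinearMap.map_le_range ?_
    rw [Submodule.map_le_iff_le_comap, ← ker_comp, ← Module.End.mul_eq_comp, ← pow_add,
      add_comm]
  have hker : ker (g ^ a) ≤ ker (g ^ (a + b)) := by
    rw [add_comm, pow_add, Module.End.mul_eq_comp]
    exact ker_le_ker_comp _ _
  rw [← φ.finrank_range_add_finrank_ker, ker_domRestrict,
    (Submodule.comapSubtypeEquivOfLe hker).finrank_eq]
  exact Nat.add_le_add_right (Submodule.finrank_mono hrange) _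

theorem finrank_ker_pow_le_mul (a : ℕ) : finrank k (ker (g ^ a)) ≤ a * finrank k (ker g) := by
  induction a with
  | zero => simp [Module.End.one_eq_id]
  | succ a ih =>
    have h := finrank_ker_pow_add_le g 1 a
    have hinf := Submodule.finrank_mono (inf_le_right : range (g ^ 1) ⊓ ker (g ^ a) ≤ _)
    rw [add_comm 1 a, pow_one] at h
    rw [pow_one] at hinf
    nlinarith

theorem pow_finrank_eq_zero_of_isNilpotent (hg : IsNilpotent g) : g ^ finrank k W = 0 := by
  simpa [hg.charpoly_eq_X_pow_finrank] using g.aeval_self_charpoly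

theorem finrank_ker_pow_of_finrank_ker_le_one (hg : IsNilpotent g)
    (h1 : finrank k (ker g) ≤ 1) (a : ℕ) : finrank k (ker (g ^ a)) = min a (finrank k W) := by
  have hzero := pow_finrank_eq_zero_of_isNilpotent g hg
  have hle : ∀ b, finrank k (ker (g ^ b)) ≤ b := fun b =>
    (finrank_ker_pow_le_mul g b).trans (mul_le_of_le_one_right (Nat.zero_le b) h1)
  rcases le_total (finrank k W) a with h | h
  · rw [pow_eq_zero_of_le h hzero, ker_zero, finrank_top]
    omega
  · have hsplit := finrank_ker_pow_add_le g a (finrank k W - a)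
    have hinf := Submodule.finrank_mono
      (inf_le_right : range (g ^ a) ⊓ ker (g ^ (finrank k W - a)) ≤ _)
    rw [Nat.add_sub_cancel' h, hzero, ker_zero, finrank_top] at hsplit
    have := hle (finrank k W - a)
    have := hle a
    omega

theorem finrank_ker_pow_le_finrank_monodromyFiltration_add {n : ℤ} {i j : ℕ}
    (hij : (j : ℤ) - i = n) :
    finrank k (ker (g ^ (i + (j + 1)))) ≤
      finrank k (monodromyFiltration g n) + finrank k (ker (g ^ i)) :=
  (finrank_ker_pow_add_le g i (j + 1)).trans <|
    Nat.add_le_add_right (Submodule.finrank_mono (range_inf_ker_le_monodromyFiltration_s9 g hij)) _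

theorem finrank_le_finrank_monodromyFiltration_add_of_finrank_ker_le_one (hg : IsNilpotent g)
    (h1 : finrank k (ker g) ≤ 1) (n : ℤ) :
    finrank k W ≤
      finrank k (monodromyFiltration g n) + finrank k (monodromyFiltration g (-n - 1)) := by
  have hK := finrank_ker_pow_of_finrank_ker_le_one g hg h1
  -- in each of `M n` and `M (-n-1)`, the term of largest dimension
  obtain ⟨i, hi⟩ : ∃ i : ℕ, i = max (-n).toNat (((finrank k W : ℤ) - n - 1) / 2).toNat :=
    ⟨_, rfl⟩
  obtain ⟨i', hi'⟩ : ∃ i' : ℕ,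
      i' = max (n + 1).toNat (((finrank k W : ℤ) + n) / 2).toNat := ⟨_, rfl⟩
  have h := finrank_ker_pow_le_finrank_monodromyFiltration_add g
    (n := n) (i := i) (j := (i + n).toNat) (by omega)
  have h' := finrank_ker_pow_le_finrank_monodromyFiltration_add g
    (n := -n - 1) (i := i') (j := (i' - n - 1).toNat) (by omega)
  rw [hK, hK] at h h'
  omega

end KernelDimension

section Products

variable {k : Type*} [Field k]

theorem LinearMap.piMap_comp_single {R ι : Type*} [Semiring R] [DecidableEq ι] {M : ι → Type*}
    [∀ i, AddCommMonoid (M i)] [∀ i, Module R (M i)] (g : ∀ i, End R (M i)) (i : ι) :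
    piMap g ∘ₗ single R M i = single R M i ∘ₗ g i := by
  refine LinearMap.ext fun x => funext fun j => ?_
  by_cases h : j = i
  · subst h
    simp
  · simp [Pi.single_eq_of_ne h]

theorem sum_finrank_monodromyFiltration_le_piMap {ι : Type*} [Fintype ι] [DecidableEq ι]
    {W : ι → Type*} [∀ i, AddCommGroup (W i)] [∀ i, Module k (W i)]
    [∀ i, FiniteDimensional k (W i)] (g : ∀ i, End k (W i)) (n : ℤ) :
    ∑ i, finrank k (monodromyFiltration (g i) n) ≤
      finrank k (monodromyFiltration (piMap g) n) := by
  have hpi : Submodule.pi Set.univ (fun i => monodromyFiltration (g i) n) ≤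
      monodromyFiltration (piMap g) n := by
    rw [← Submodule.iSup_map_single]
    exact iSup_le fun i => map_monodromyFiltration_le _ (piMap_comp_single g i) n
  set φ := piMap fun i => (monodromyFiltration (g i) n).subtype
  have hφ : Function.Injective φ := by
    rw [coe_piMap]
    exact Function.Injective.piMap fun i => Subtype.val_injective
  have hrange : range φ ≤ Submodule.pi Set.univ fun i => monodromyFiltration (g i) n := by
    rintro _ ⟨x, rfl⟩ i -
    exact (x i).2
  calc ∑ i, finrank k (monodromyFiltration (g i) n)
      = finrank k (∀ i, monodromyFiltration (g i) n) := (finrank_pi_fintype k).symm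
    _ = finrank k (range φ) := (finrank_range_of_inj hφ).symm
    _ ≤ _ := Submodule.finrank_mono (hrange.trans hpi)

end Products

section Decomposition

variable {k : Type u} [Field k]

theorem finrank_ker_lsmul_X_le_one (I : Submodule k[X] k[X]) [FiniteDimensional k (k[X] ⧸ I)] :
    finrank k (ker (Algebra.lsmul k k (k[X] ⧸ I) (X : k[X]))) ≤ 1 := by
  set g := Algebra.lsmul k k (k[X] ⧸ I) (X : k[X])
  have htop : (k ∙ Submodule.Quotient.mk (p := I) 1) ⊔ range g = ⊤ := by
    refine eq_top_iff.2 fun x _ => ?_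
    obtain ⟨P, rfl⟩ := Submodule.Quotient.mk_surjective I x
    have hP : Submodule.Quotient.mk (p := I) P =
        P.coeff 0 • Submodule.Quotient.mk 1 + g (Submodule.Quotient.mk P.divX) := by
      conv_lhs => rw [← X_mul_divX_add P, add_comm, ← mul_one (C _), ← smul_eq_C_mul]
      rfl
    rw [hP]
    exact Submodule.add_mem_sup (Submodule.smul_mem _ _ (Submodule.mem_span_singleton_self _))
      (mem_range_self g _)
  have hsup := Submodule.finrank_add_le_finrank_add_finrank (k ∙ Submodule.Quotient.mk (p := I) 1)
    (range g)
  rw [htop, finrank_top] at hsup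
  have hspan :=
    finrank_span_le_card (R := k) ({Submodule.Quotient.mk (p := I) 1} : Set (k[X] ⧸ I))
  rw [Set.toFinset_singleton, Finset.card_singleton] at hspan
  have := g.finrank_range_add_finrank_ker
  omega

theorem exists_linearEquiv_pi_quotient {V : Type*} [AddCommGroup V] [Module k V]
    [FiniteDimensional k V] (f : End k V) :
    ∃ (ι : Type u) (_ : Fintype ι) (I : ι → Submodule k[X] k[X])
      (_ : ∀ i, FiniteDimensional k (k[X] ⧸ I i)) (e : (∀ i, k[X] ⧸ I i) ≃ₗ[k] V),
      f ∘ₗ e = e ∘ₗ piMap fun i => Algebra.lsmul k k (k[X] ⧸ I i) (X : k[X]) := by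
  have htors : Module.IsTorsion k[X] (AEval' f) := fun {x} =>
    ⟨⟨f.charpoly, mem_nonZeroDivisors_of_ne_zero f.charpoly_monic.ne_zero⟩,
      (AEval'.of f).symm.injective (by simp [f.aeval_self_charpoly])⟩
  obtain ⟨ι, _, p, -, m, ⟨E⟩⟩ := Module.equiv_directSum_of_isTorsion htors
  let e := ((E ≪≫ₗ DirectSum.linearEquivFunOnFintype k[X] ι _).restrictScalars k).symm
    ≪≫ₗ (AEval'.of f).symm
  have hfin : ∀ i, FiniteDimensional k (k[X] ⧸ k[X] ∙ p i ^ m i) := fun i =>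
    Module.Finite.of_surjective ((proj i).comp e.symm.toLinearMap)
      ((Function.surjective_eval i).comp e.symm.surjective)
  refine ⟨ι, inferInstance, _, hfin, e, LinearMap.ext fun x => e.symm.injective ?_⟩
  simp only [e, LinearEquiv.trans_symm, LinearEquiv.symm_symm, coe_comp, LinearEquiv.coe_coe,
    Function.comp_apply, LinearEquiv.trans_apply, LinearEquiv.restrictScalars_symm_apply,
    LinearEquiv.restrictScalars_apply, LinearEquiv.apply_symm_apply, ← AEval'.X_smul_of, map_smul]
  rfl

theorem finrank_le_finrank_monodromyFiltration_add {V : Type*} [AddCommGroup V] [Module k V]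
    [FiniteDimensional k V] (f : End k V) (hf : IsNilpotent f) (n : ℤ) :
    finrank k V ≤
      finrank k (monodromyFiltration f n) + finrank k (monodromyFiltration f (-n - 1)) := by
  classical
  obtain ⟨ι, _, I, _, e, he⟩ := exists_linearEquiv_pi_quotient f
  set g : ∀ i, End k (k[X] ⧸ I i) := fun i => Algebra.lsmul k k (k[X] ⧸ I i) (X : k[X])
  have hnil : ∀ i, IsNilpotent (g i) := fun i =>
    isNilpotent_of_injective_of_comp_eq (φ := e.toLinearMap ∘ₗ single k (k[X] ⧸ I ·) i)
      (e.injective.comp (Pi.single_injective (M := (k[X] ⧸ I ·)) i)) (by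
        rw [← LinearMap.comp_assoc, he, LinearMap.comp_assoc, piMap_comp_single,
          LinearMap.comp_assoc]) hf
  have hM : ∀ n, ∑ i, finrank k (monodromyFiltration (g i) n) ≤
      finrank k (monodromyFiltration f n) := fun n =>
    (sum_finrank_monodromyFiltration_le_piMap g n).trans <|
      (e.finrank_map_eq _).symm.le.trans
        (Submodule.finrank_mono (map_monodromyFiltration_le _ he n))
  calc finrank k V = ∑ i, finrank k (k[X] ⧸ I i) := by rw [← e.finrank_eq, finrank_pi_fintype]
    _ ≤ ∑ i, (finrank k (monodromyFiltration (g i) n) +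
          finrank k (monodromyFiltration (g i) (-n - 1))) :=
      Finset.sum_le_sum fun i _ => finrank_le_finrank_monodromyFiltration_add_of_finrank_ker_le_one
        (g i) (hnil i) (finrank_ker_lsmul_X_le_one (I i)) n
    _ ≤ _ := by rw [Finset.sum_add_distrib]; exact add_le_add (hM n) (hM (-n - 1))

end Decomposition

theorem orthogonal_monodromyFiltration_general
    {k V : Type*} [Field k] [AddCommGroup V] [Module k V] [FiniteDimensional k V]
    (B : LinearMap.BilinForm k V)
    (hB : B.Nondegenerate)
    (f : V →ₗ[k] V) (hf : IsNilpotent f)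
    (hself : ∀ x y, B (f x) y = B x (f y)) (n : ℤ) :
    B.orthogonal (monodromyFiltration f n) = monodromyFiltration f (-n - 1) := by
  refine (Submodule.eq_of_le_of_finrank_le (monodromyFiltration_le_orthogonal hself n) ?_).symm
  have := finrank_le_finrank_monodromyFiltration_add f hf n
  rw [LinearMap.BilinForm.finrank_orthogonal hB]
  omega

/-- Let `V` be a finite-dimensional vector space over a field `k`,
`B` a nondegenerate symmetric bilinear form on `V`, and `f` a nilpotent endomorphism of `V`
which is self-adjoint with respect to `B`.  Then for every `n : ℤ`, the `B`-orthogonal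
complement of `M n` equals `M (-n-1)`, where `M` is the monodromy weight filtration of `f`. -/
theorem orthogonal_monodromyFiltration
    {k V : Type*} [Field k] [AddCommGroup V] [Module k V] [FiniteDimensional k V]
    (B : LinearMap.BilinForm k V)
    (hB : B.Nondegenerate) (hsymm : ∀ x y, B x y = B y x)
    (f : V →ₗ[k] V) (hf : IsNilpotent f)
    (hself : ∀ x y, B (f x) y = B x (f y)) (n : ℤ) :
    B.orthogonal (monodromyFiltration f n) = monodromyFiltration f (-n - 1) :=
  orthogonal_monodromyFiltration_general B hB f hf hself n
end
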